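/- The map d(λ) = λ* (transpose) restricts to an order-reversing bijection from the set of special type-C partitions P^{sp}_C(2n) = P_{1,0}(2n) to itself. -/

import Mathlib

/-- A partition of `N`: a weakly decreasing function `ℕ → ℕ` (0-indexed parts,
eventually zero) whose sum is `N`. -/
structure NPartition (N : ℕ) where
  part : ℕ → ℕ
  antitone : ∀ ⦃i j : ℕ⦄, i ≤ j → part j ≤ part i
  bound : ℕ
  bound_zero : ∀ i, bound ≤ i → part i = 0
  sum_parts : ∑ i ∈ Finset.range bound, part i = N

namespace NPartition

variable {M N : ℕ}

/-- Multiplicity of the part `s` in `p` (intended for `s ≥ 1`). -/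
def mult (p : NPartition N) (s : ℕ) : ℕ :=
  ((Finset.range p.bound).filter (fun j => p.part j = s)).card

/-- Height `h_p(s) = #{j : p_j ≥ s}`, with the convention that `height p 0`
is the number of (positive) parts of `p`. -/
def height (p : NPartition N) (s : ℕ) : ℕ :=
  ((Finset.range p.bound).filter (fun j => max s 1 ≤ p.part j)).card

/-- `Dominates lam mu` means `mu ⪯ lam` in the dominance order. -/
def Dominates (lam mu : NPartition N) : Prop :=
  ∀ k : ℕ, ∑ i ∈ Finset.range k, mu.part i ≤ ∑ i ∈ Finset.range k, lam.part i

/-- The transpose (conjugate) part function: `(p*)_i = #{j : p_j ≥ i+1}` (0-indexed). -/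
def transposeFun (p : NPartition N) : ℕ → ℕ :=
  fun i => ((Finset.range p.bound).filter (fun j => i + 1 ≤ p.part j)).card

/-- Every (positive) part congruent to `ε` mod 2 has even multiplicity. -/
def EvenMult (ε : ℕ) (p : NPartition N) : Prop :=
  ∀ s, 1 ≤ s → s % 2 = ε % 2 → mult p s % 2 = 0

/-- Membership in `P_{ε,ε'}(N)`: parts `≡ ε (mod 2)` have even multiplicity and
height `≡ ε' (mod 2)`, including the convention at `s = 0` (whose height is the
number of parts) when `ε = 0`. -/
def SpecialCond (ε ε' : ℕ) (p : NPartition N) : Prop :=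
  EvenMult ε p ∧
  (∀ s, 1 ≤ s → mult p s ≠ 0 → s % 2 = ε % 2 → height p s % 2 = ε' % 2) ∧
  (ε = 0 → height p 0 % 2 = ε' % 2)

/-- `q` is the `ε`-collapse of `p`: the dominance-greatest partition dominated by `p`
all of whose parts `≡ ε (mod 2)` have even multiplicity. -/
def IsCollapse (ε : ℕ) (p q : NPartition N) : Prop :=
  EvenMult ε q ∧ Dominates p q ∧
    ∀ r : NPartition N, EvenMult ε r → Dominates p r → Dominates q r

/-- `q = p⁻`: decrease the smallest (positive) part of `p` by one. -/
def IsMinus (p : NPartition M) (q : NPartition N) : Prop :=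
  (∀ i, i + 1 ≠ height p 0 → q.part i = p.part i) ∧
  q.part (height p 0 - 1) = p.part (height p 0 - 1) - 1

/-- `q = p⁺`: increase the largest part of `p` by one. -/
def IsPlus (p : NPartition M) (q : NPartition N) : Prop :=
  q.part 0 = p.part 0 + 1 ∧ ∀ i, 1 ≤ i → q.part i = p.part i

/-- `q = f_{BC}(p) = (p⁻)_C`. -/
def IsFBC (n : ℕ) (p : NPartition (2*n+1)) (q : NPartition (2*n)) : Prop :=
  ∃ pm : NPartition (2*n), IsMinus p pm ∧ IsCollapse 1 pm q

/-- `q = f_{CB}(p) = (p⁺)_B`. -/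
def IsFCB (n : ℕ) (p : NPartition (2*n)) (q : NPartition (2*n+1)) : Prop :=
  ∃ pp : NPartition (2*n+1), IsPlus p pp ∧ IsCollapse 0 pp q

end NPartition

/-!
Transposition is an involution since `i < λ*_j ↔ j < λ_i`. If `λ ∈ P_{1,0}`, then for
every `t` the rows `λ_{2t}, λ_{2t+1}` are equal or both even, because an even height
`h_λ(s)` cannot separate row `2t` from row `2t+1`. For `λ*` the odd part `2t+1` has
height `λ_{2t}` and multiplicity `λ_{2t} - λ_{2t+1}`, so both are even whenever the part
occurs, and `λ*` is again in `P_{1,0}`.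

For the order, `∑_{i<k} λ*_i = ∑_j min(λ_j, k) = N - ∑_j (λ_j - k)⁺`, and with `m = μ*_k`,
`∑_j (μ_j - k)⁺ = ∑_{j<m} μ_j - mk ≤ ∑_{j<m} λ_j - mk ≤ ∑_j (λ_j - k)⁺` when `μ ⪯ λ`.
-/

theorem Finset.sum_le_sum_tsub_add_card_mul {ι : Type*} (s : Finset ι) (f : ι → ℕ) (k : ℕ) :
    ∑ j ∈ s, f j ≤ ∑ j ∈ s, (f j - k) + s.card * k := by
  rw [← smul_eq_mul, ← Finset.sum_const, ← Finset.sum_add_distrib]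
  exact Finset.sum_le_sum fun j _ => le_tsub_add

namespace NPartition

open Finset

variable {N : ℕ}

theorem lt_bound_of_pos_part (p : NPartition N) {i : ℕ} (h : 0 < p.part i) : i < p.bound := by
  by_contra! hi
  exact h.ne' (p.bound_zero i hi)

theorem lt_transposeFun_iff (p : NPartition N) (i j : ℕ) :
    i < transposeFun p j ↔ j < p.part i := by
  unfold transposeFun
  constructor
  · intro h
    by_contra! hle
    have hsub : {k ∈ range p.bound | j + 1 ≤ p.part k} ⊆ range i := fun k hk => by
      have hk := (mem_filter.1 hk).2
      by_contra hik
      have := p.antitone (not_lt.1 (mt mem_range.2 hik))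
      omega
    exact (card_le_card hsub).not_gt (by simpa using h)
  · intro h
    have hsub : range (i + 1) ⊆ {k ∈ range p.bound | j + 1 ≤ p.part k} := fun k hk => by
      have hk : p.part i ≤ p.part k := p.antitone (Nat.le_of_lt_succ (mem_range.1 hk))
      exact mem_filter.2 ⟨mem_range.2 (p.lt_bound_of_pos_part (by omega)), by omega⟩
    simpa using card_le_card hsub

theorem transposeFun_transposeFun {p q : NPartition N} (hq : q.part = transposeFun p) :
    transposeFun q = p.part := by
  funext i
  refine eq_of_forall_lt_iff fun j => ?_
  rw [lt_transposeFun_iff, hq, lt_transposeFun_iff]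

theorem height_succ (p : NPartition N) (s : ℕ) : height p (s + 1) = transposeFun p s := by
  simp [height, transposeFun]

theorem lt_height_iff (p : NPartition N) {s : ℕ} (hs : 0 < s) (j : ℕ) :
    j < height p s ↔ s ≤ p.part j := by
  obtain ⟨s, rfl⟩ := Nat.exists_eq_add_one_of_ne_zero hs.ne'
  rw [height_succ, lt_transposeFun_iff, Nat.add_one_le_iff]

theorem mult_succ_add_transposeFun_succ (p : NPartition N) (s : ℕ) :
    mult p (s + 1) + transposeFun p (s + 1) = transposeFun p s := by
  simp only [mult, transposeFun, card_filter, ← sum_add_distrib]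
  refine sum_congr rfl fun j _ => ?_
  split_ifs <;> omega

theorem mult_part_ne_zero (p : NPartition N) {j : ℕ} (hj : 0 < p.part j) :
    mult p (p.part j) ≠ 0 :=
  card_ne_zero_of_mem (mem_filter.2 ⟨mem_range.2 (p.lt_bound_of_pos_part hj), rfl⟩)

theorem le_part_succ_of_height_even (p : NPartition N) {s : ℕ} (t : ℕ) (hs : 0 < s)
    (heven : height p s % 2 = 0) (h : s ≤ p.part (2 * t)) : s ≤ p.part (2 * t + 1) := by
  have := (p.lt_height_iff hs (2 * t)).2 h
  exact (p.lt_height_iff hs (2 * t + 1)).1 (by omega)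

theorem SpecialCond.part_eq_or_even {p : NPartition N} (hp : SpecialCond 1 0 p) (t : ℕ) :
    p.part (2 * t) = p.part (2 * t + 1) ∨
      (p.part (2 * t) % 2 = 0 ∧ p.part (2 * t + 1) % 2 = 0) := by
  obtain ⟨hmult, hheight, -⟩ := hp
  have hanti : p.part (2 * t + 1) ≤ p.part (2 * t) := p.antitone (Nat.le_succ _)
  rcases Nat.mod_two_eq_zero_or_one (p.part (2 * t)) with ha | ha
  · rcases Nat.mod_two_eq_zero_or_one (p.part (2 * t + 1)) with hb | hb
    · exact .inr ⟨ha, hb⟩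
    left
    obtain ⟨c, hc⟩ : ∃ c, p.part (2 * t + 1) = c + 1 := ⟨p.part (2 * t + 1) - 1, by omega⟩
    have hcmult := hmult (c + 1) (by omega) (by omega)
    have hcheight := hheight (c + 1) (by omega) (hc ▸ p.mult_part_ne_zero (by omega)) (by omega)
    have hsplit := p.mult_succ_add_transposeFun_succ c
    rw [height_succ] at hcheight
    by_contra hne
    -- `h_λ(c+2) = h_λ(c+1) - mult_λ(c+1)` is even, yet `c + 2 ≤ λ_{2t}`.
    have := p.le_part_succ_of_height_even (s := c + 2) t (by omega)
      (by rw [height_succ]; omega) (by omega)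
    omega
  · have := p.le_part_succ_of_height_even t (by omega)
      (hheight _ (by omega) (p.mult_part_ne_zero (by omega)) (by omega)) le_rfl
    omega

theorem SpecialCond.transpose {p q : NPartition N} (hp : SpecialCond 1 0 p)
    (hq : q.part = transposeFun p) : SpecialCond 1 0 q := by
  have hqq := transposeFun_transposeFun hq
  have key : ∀ t, q.mult (2 * t + 1) + p.part (2 * t + 1) = p.part (2 * t) ∧
      q.height (2 * t + 1) = p.part (2 * t) := fun t => by
    rw [height_succ, ← hqq]
    exact ⟨q.mult_succ_add_transposeFun_succ (2 * t), rfl⟩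
  refine ⟨fun s _ hs => ?_, fun s _ _ hs => ?_, by omega⟩ <;>
  · obtain ⟨t, rfl⟩ : ∃ t, s = 2 * t + 1 := ⟨s / 2, by omega⟩
    have := key t
    rcases hp.part_eq_or_even t with h | h <;> omega

theorem sum_range_part_of_bound_le (p : NPartition N) {B : ℕ} (hB : p.bound ≤ B) :
    ∑ j ∈ range B, p.part j = N := by
  refine (sum_subset (range_subset_range.2 hB) fun j _ hj => ?_).symm.trans p.sum_parts
  exact p.bound_zero j (not_lt.1 (mt mem_range.2 hj))

theorem transposeFun_eq_card_of_bound_le (p : NPartition N) {B : ℕ} (hB : p.bound ≤ B)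
    (i : ℕ) : transposeFun p i = #{j ∈ range B | i < p.part j} := by
  unfold transposeFun
  congr 1
  ext j
  simp only [mem_filter, mem_range]
  exact ⟨fun h => ⟨h.1.trans_le hB, h.2⟩, fun h => ⟨p.lt_bound_of_pos_part (by omega), h.2⟩⟩

theorem transposeFun_le_of_bound_le (p : NPartition N) {B : ℕ} (hB : p.bound ≤ B) (i : ℕ) :
    transposeFun p i ≤ B := by
  rw [p.transposeFun_eq_card_of_bound_le hB]
  exact (card_filter_le _ _).trans (card_range B).le

theorem sum_range_transposeFun (p : NPartition N) {B : ℕ} (hB : p.bound ≤ B) (k : ℕ) :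
    ∑ i ∈ range k, transposeFun p i = ∑ j ∈ range B, min (p.part j) k := by
  simp only [p.transposeFun_eq_card_of_bound_le hB, card_filter]
  rw [sum_comm]
  refine sum_congr rfl fun j _ => ?_
  rw [← card_filter, ← card_range (min (p.part j) k)]
  congr 1
  ext i
  simp only [mem_filter, mem_range]
  omega

theorem sum_tsub_add_transposeFun_mul (p : NPartition N) {B : ℕ} (hB : p.bound ≤ B) (k : ℕ) :
    ∑ j ∈ range B, (p.part j - k) + transposeFun p k * k =
      ∑ j ∈ range (transposeFun p k), p.part j := by
  have hlt (j : ℕ) : j < transposeFun p k ↔ k < p.part j := p.lt_transposeFun_iff j k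
  have htail : ∑ j ∈ range (transposeFun p k), (p.part j - k) = ∑ j ∈ range B, (p.part j - k) :=
    sum_subset (range_subset_range.2 (p.transposeFun_le_of_bound_le hB k)) fun j _ hj => by
      have := (hlt j).not.1 (mt mem_range.2 hj)
      omega
  have hconst : transposeFun p k * k = ∑ _j ∈ range (transposeFun p k), k := by simp
  rw [← htail, hconst, ← sum_add_distrib]
  exact sum_congr rfl fun j hj => by have := (hlt j).1 (mem_range.1 hj); omega

theorem Dominates.transpose {lam mu qlam qmu : NPartition N} (hdom : Dominates lam mu)
    (hqlam : qlam.part = transposeFun lam) (hqmu : qmu.part = transposeFun mu) :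
    Dominates qmu qlam := by
  intro k
  set B := max lam.bound mu.bound
  have hlam : lam.bound ≤ B := le_max_left _ _
  have hmu : mu.bound ≤ B := le_max_right _ _
  have hsplit (p : NPartition N) (hp : p.bound ≤ B) :
      ∑ j ∈ range B, min (p.part j) k + ∑ j ∈ range B, (p.part j - k) = N := by
    rw [← sum_add_distrib]
    exact (sum_congr rfl fun j _ => by omega).trans (p.sum_range_part_of_bound_le hp)
  set m := transposeFun mu k
  have htail : ∑ j ∈ range B, (mu.part j - k) + m * k ≤ ∑ j ∈ range B, (lam.part j - k) + m * k :=
    calc ∑ j ∈ range B, (mu.part j - k) + m * k = ∑ j ∈ range m, mu.part j :=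
          mu.sum_tsub_add_transposeFun_mul hmu k
    _ ≤ ∑ j ∈ range m, lam.part j := hdom m
    _ ≤ ∑ j ∈ range m, (lam.part j - k) + m * k := by
          simpa using (range m).sum_le_sum_tsub_add_card_mul lam.part k
    _ ≤ ∑ j ∈ range B, (lam.part j - k) + m * k := by
          gcongr
          exact mu.transposeFun_le_of_bound_le hmu k
  rw [hqlam, hqmu, lam.sum_range_transposeFun hlam, mu.sum_range_transposeFun hmu]
  have := hsplit lam hlam
  have := hsplit mu hmu
  omega

end NPartition

/-- the transpose restricts to an order-reversing bijection (an involution)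
of `P^{sp}_C(2n) = P_{1,0}(2n)`. -/
theorem transpose_specialC (n : ℕ) :
    (∀ p q : NPartition (2 * n), q.part = NPartition.transposeFun p →
      NPartition.SpecialCond 1 0 p → NPartition.SpecialCond 1 0 q) ∧
    (∀ p q : NPartition (2 * n), q.part = NPartition.transposeFun p →
      NPartition.transposeFun q = p.part) ∧
    (∀ lam mu qlam qmu : NPartition (2 * n),
      qlam.part = NPartition.transposeFun lam →
      qmu.part = NPartition.transposeFun mu →
      NPartition.SpecialCond 1 0 lam → NPartition.SpecialCond 1 0 mu →
      NPartition.Dominates lam mu → NPartition.Dominates qmu qlam) :=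
  ⟨fun _ _ hq hp => hp.transpose hq,
    fun _ _ hq => NPartition.transposeFun_transposeFun hq,
    fun _ _ _ _ hqlam hqmu _ _ hdom => hdom.transpose hqlam hqmu⟩
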